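/- Expected cost of a random simplified input sequence: let (X,ρ) be a metric space, let T = {τ₁,…,τₙ} be a set of n point sequences over X, each of complexity at most m, let p ∈ [1,∞), let ℓ ≤ m with ℓ ≥ 2, and let α ≥ 1. For each τ ∈ T fix an (α,ℓ)-simplification τ̃ of τ under dtw_p. If π is drawn uniformly at random from T, then E_π[ cost_p^1(T, π̃) ] ≤ (2+α) · m^{1/p} · ℓ^{1/p} · OPT_ℓ, where OPT_ℓ = min_{c ∈ X^{≤ℓ}} cost_p^1(T,c) is the optimal restricted (p,1)-mean cost of T. -/

import Mathlib

open scoped BigOperators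

/-- An `(m₁, m₂)`-warping (with 0-based indices): a sequence of index pairs starting at
`(0,0)`, ending at `(m₁-1, m₂-1)`, whose consecutive increments lie in
`{(0,1), (1,0), (1,1)}`. -/
def IsWarping (m₁ m₂ : ℕ) (W : List (ℕ × ℕ)) : Prop :=
  W ≠ [] ∧ W.head? = some (0, 0) ∧ W.getLast? = some (m₁ - 1, m₂ - 1) ∧
    ∀ k, k + 1 < W.length →
      W.getD (k + 1) (0, 0) = ((W.getD k (0, 0)).1, (W.getD k (0, 0)).2 + 1) ∨
      W.getD (k + 1) (0, 0) = ((W.getD k (0, 0)).1 + 1, (W.getD k (0, 0)).2) ∨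
      W.getD (k + 1) (0, 0) = ((W.getD k (0, 0)).1 + 1, (W.getD k (0, 0)).2 + 1)

/-- The cost `Σ_{(i,j) ∈ W} ρ(σ_i, τ_j)^p` of a warping `W`. -/
noncomputable def warpCost {X : Type*} [MetricSpace X] [Inhabited X]
    (p : ℝ) (σ τ : List X) (W : List (ℕ × ℕ)) : ℝ :=
  (W.map fun ij => dist (σ.getD ij.1 default) (τ.getD ij.2 default) ^ p).sum

/-- The `p`-dynamic time warping distance between two point sequences. -/
noncomputable def dtw {X : Type*} [MetricSpace X] [Inhabited X] (p : ℝ) (σ τ : List X) : ℝ :=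
  sInf { c : ℝ | ∃ W, IsWarping σ.length τ.length W ∧ c = warpCost p σ τ W ^ (1 / p) }

/-- `cost_p^q(T, c) = Σ_{τ ∈ T} dtw_p(c, τ)^q`. -/
noncomputable def dtwCost {X : Type*} [MetricSpace X] [Inhabited X]
    (p q : ℝ) (T : Finset (List X)) (c : List X) : ℝ :=
  ∑ τ ∈ T, dtw p c τ ^ q

/-- `σ` is a point sequence of complexity at most `ℓ`, i.e. `σ ∈ X^{≤ℓ}`. -/
def SeqLE {X : Type*} (ℓ : ℕ) (σ : List X) : Prop := 2 ≤ σ.length ∧ σ.length ≤ ℓ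

/-!
Gluing a warping of `x` with `y` to one of `y` with `z` along the shared index `j` yields a
warping of `x` with `z` each of whose cells `(i, k)` comes from cells `(i, j)` and `(j, k)`.
By the triangle inequality and Minkowski's inequality its cost splits into two sums; a cell
`(i, j)` of the first warping is reused for at most `|z|` values of `k`, a cell `(j, k)` of the
second for at most `|x|` values of `i`. Hence
`dtw(x, z) ≤ |z|^{1/p} dtw(x, y) + |x|^{1/p} dtw(y, z)`.
Applied through `c` and then through `π`, this bounds `dtw(π̃, τ)` by
`m^{1/p} ℓ^{1/p} ((1 + α) dtw(c, π) + dtw(c, τ))`; summing over `τ` and averaging over `π`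
turns the bracket into `(2 + α) cost(c)`.
-/

open Relation

def WarpStep (a b : ℕ × ℕ) : Prop :=
  b = (a.1, a.2 + 1) ∨ b = (a.1 + 1, a.2) ∨ b = (a.1 + 1, a.2 + 1)

namespace WarpStep

theorem le {a b : ℕ × ℕ} (h : WarpStep a b) : a ≤ b := by
  rcases h with rfl | rfl | rfl <;> simp [Prod.le_def]

theorem add_lt {a b : ℕ × ℕ} (h : WarpStep a b) : a.1 + a.2 < b.1 + b.2 := by
  rcases h with rfl | rfl | rfl <;> simp only <;> omega

theorem swap {a b : ℕ × ℕ} (h : WarpStep a b) : WarpStep a.swap b.swap := by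
  rcases h with rfl | rfl | rfl <;> simp [WarpStep]

end WarpStep

theorem isWarping_iff {m₁ m₂ : ℕ} {W : List (ℕ × ℕ)} :
    IsWarping m₁ m₂ W ↔ W ≠ [] ∧ W.head? = some (0, 0) ∧
      W.getLast? = some (m₁ - 1, m₂ - 1) ∧ W.IsChain WarpStep := by
  rw [List.isChain_iff_getElem]
  refine and_congr_right' <| and_congr_right' <| and_congr_right' <| forall_congr' fun k =>
    forall_congr' fun hk => ?_
  rw [List.getD_eq_getElem _ _ hk, List.getD_eq_getElem _ _ (Nat.lt_of_succ_lt hk)]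
  rfl

namespace IsWarping

variable {m₁ m₂ : ℕ} {W : List (ℕ × ℕ)}

theorem nodup (h : IsWarping m₁ m₂ W) : W.Nodup := by
  have hchain : (W.map fun q => q.1 + q.2).IsChain (· < ·) :=
    List.isChain_map_of_isChain _ (fun _ _ h => h.add_lt) (isWarping_iff.1 h).2.2.2
  exact (List.isChain_iff_pairwise.1 hchain).nodup.of_map _

theorem le_of_mem (h : IsWarping m₁ m₂ W) {q : ℕ × ℕ} (hq : q ∈ W) :
    q.1 ≤ m₁ - 1 ∧ q.2 ≤ m₂ - 1 := by
  obtain ⟨-, -, hlast, hchain⟩ := isWarping_iff.1 h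
  have hsorted : W.Pairwise (· ≤ ·) :=
    List.isChain_iff_pairwise.1 (hchain.imp fun _ _ => WarpStep.le)
  rw [List.getLast?_eq_some_getLast (List.ne_nil_of_mem hq), Option.some.injEq] at hlast
  have hle := hsorted.rel_getLast hq
  rwa [hlast, Prod.le_def] at hle

theorem exists_warpStep (h : IsWarping m₁ m₂ W) {q : ℕ × ℕ} (hq : q ∈ W)
    (hne : q ≠ (m₁ - 1, m₂ - 1)) : ∃ q' ∈ W, WarpStep q q' := by
  obtain ⟨-, -, hlast, hchain⟩ := isWarping_iff.1 h
  obtain ⟨n, hn, rfl⟩ := List.getElem_of_mem hq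
  rw [List.isChain_iff_getElem] at hchain
  by_cases hn' : n + 1 < W.length
  · exact ⟨W[n + 1], List.getElem_mem _, hchain n hn'⟩
  · obtain rfl : n = W.length - 1 := by omega
    rw [List.getLast?_eq_getElem?, List.getElem?_eq_getElem hn, Option.some.injEq] at hlast
    exact absurd hlast hne

theorem swap (h : IsWarping m₁ m₂ W) : IsWarping m₂ m₁ (W.map Prod.swap) := by
  obtain ⟨hne, hhead, hlast, hchain⟩ := isWarping_iff.1 h
  refine isWarping_iff.2 ⟨by simpa using hne, ?_, ?_, ?_⟩
  · simp [hhead]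
  · simp [hlast]
  · exact List.isChain_map_of_isChain _ (fun _ _ h => h.swap) hchain

end IsWarping

theorem Relation.reflTransGen_of_exists_rel_measure_lt {α : Type*} {r : α → α → Prop}
    (P : α → Prop) (f : α → ℕ) {e : α}
    (h : ∀ a, P a → a ≠ e → ∃ b, P b ∧ r a b ∧ f b < f a) :
    ∀ a, P a → ReflTransGen r a e := by
  intro a
  induction a using (measure f).wf.induction with
  | _ a ih =>
    intro ha
    by_cases hae : a = e
    · exact hae ▸ .refl
    · obtain ⟨b, hb, hab, hlt⟩ := h a ha hae
      exact .head hab (ih b hlt hb)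

theorem exists_isWarping_of_reflTransGen {m₁ m₂ : ℕ} {S : Set (ℕ × ℕ)} (h₀ : (0, 0) ∈ S)
    (h : ReflTransGen (fun a b => WarpStep a b ∧ b ∈ S) (0, 0) (m₁ - 1, m₂ - 1)) :
    ∃ W, IsWarping m₁ m₂ W ∧ ∀ q ∈ W, q ∈ S := by
  obtain ⟨l, hchain, hlast⟩ := List.exists_isChain_cons_of_relationReflTransGen h
  refine ⟨(0, 0) :: l, isWarping_iff.2 ⟨List.cons_ne_nil _ _, rfl, ?_, ?_⟩, ?_⟩
  · rw [List.getLast?_eq_some_getLast (List.cons_ne_nil _ _), hlast]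
  · exact hchain.imp fun _ _ => And.left
  · exact hchain.induction _ _ (fun _ _ hab _ => hab.2) fun _ => h₀

theorem exists_isWarping (m₁ m₂ : ℕ) : ∃ W, IsWarping m₁ m₂ W := by
  let box : Set (ℕ × ℕ) := {q | q.1 ≤ m₁ - 1 ∧ q.2 ≤ m₂ - 1}
  suffices h : ReflTransGen (fun a b => WarpStep a b ∧ b ∈ box) (0, 0) (m₁ - 1, m₂ - 1) from
    (exists_isWarping_of_reflTransGen (by simp [box]) h).imp fun _ => And.left
  refine reflTransGen_of_exists_rel_measure_lt (· ∈ box) (fun q => (m₁ - 1 - q.1) + (m₂ - 1 - q.2))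
    ?_ _ (by simp [box])
  rintro ⟨i, k⟩ ⟨hi, hk⟩ hne
  by_cases hi' : i < m₁ - 1
  · exact ⟨(i + 1, k), ⟨hi', hk⟩, ⟨Or.inr (Or.inl rfl), hi', hk⟩, by simp only; omega⟩
  · have hk' : k < m₂ - 1 := by
      by_contra
      exact hne (Prod.ext (by omega) (by omega))
    exact ⟨(i, k + 1), ⟨hi, hk'⟩, ⟨Or.inl rfl, hi, hk'⟩, by simp only; omega⟩

namespace IsWarping

variable {m₁ m₂ m₃ : ℕ} {W W₁ W₂ : List (ℕ × ℕ)}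

theorem zero_mem (h : IsWarping m₁ m₂ W) : (0, 0) ∈ W :=
  List.mem_of_mem_head? (isWarping_iff.1 h).2.1

theorem exists_mem_snd_succ (h : IsWarping m₁ m₂ W) {i j : ℕ} (hij : (i, j) ∈ W)
    (hne : (i, j) ≠ (m₁ - 1, m₂ - 1)) (hi : (i + 1, j) ∉ W) :
    ∃ i', (i', j + 1) ∈ W ∧ (i' = i ∨ i' = i + 1) := by
  obtain ⟨q, hq, hstep⟩ := h.exists_warpStep hij hne
  rcases hstep with rfl | rfl | rfl
  · exact ⟨i, hq, Or.inl rfl⟩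
  · exact absurd hq hi
  · exact ⟨i + 1, hq, Or.inr rfl⟩

theorem exists_mem_fst_succ (h : IsWarping m₁ m₂ W) {j k : ℕ} (hjk : (j, k) ∈ W)
    (hne : (j, k) ≠ (m₁ - 1, m₂ - 1)) (hk : (j, k + 1) ∉ W) :
    ∃ k', (j + 1, k') ∈ W ∧ (k' = k ∨ k' = k + 1) := by
  obtain ⟨q, hq, hstep⟩ := h.exists_warpStep hjk hne
  rcases hstep with rfl | rfl | rfl
  · exact absurd hq hk
  · exact ⟨k, hq, Or.inl rfl⟩
  · exact ⟨k + 1, hq, Or.inr rfl⟩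

theorem exists_comp_step (h₁ : IsWarping m₁ m₂ W₁) (h₂ : IsWarping m₂ m₃ W₂) {i j k : ℕ}
    (hij : (i, j) ∈ W₁) (hjk : (j, k) ∈ W₂) (hne : (i, j, k) ≠ (m₁ - 1, m₂ - 1, m₃ - 1)) :
    ∃ i' j' k', (i', j') ∈ W₁ ∧ (j', k') ∈ W₂ ∧ (i' = i ∨ i' = i + 1) ∧
      (k' = k ∨ k' = k + 1) ∧ i + j + k < i' + j' + k' := by
  by_cases hi : (i + 1, j) ∈ W₁
  · exact ⟨i + 1, j, k, hi, hjk, Or.inr rfl, Or.inl rfl, by omega⟩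
  by_cases hk : (j, k + 1) ∈ W₂
  · exact ⟨i, j, k + 1, hij, hk, Or.inl rfl, Or.inr rfl, by omega⟩
  -- Otherwise both paths have to advance in the shared coordinate `j`.
  have hj : j < m₂ - 1 := by
    by_contra hj
    have hend₁ : (i, j) = (m₁ - 1, m₂ - 1) := by
      by_contra hne₁
      obtain ⟨i', hi', -⟩ := h₁.exists_mem_snd_succ hij hne₁ hi
      have := (h₁.le_of_mem hi').2
      omega
    have hend₂ : (j, k) = (m₂ - 1, m₃ - 1) := by
      by_contra hne₂
      obtain ⟨k', hk', -⟩ := h₂.exists_mem_fst_succ hjk hne₂ hk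
      have := (h₂.le_of_mem hk').1
      omega
    simp only [Prod.mk.injEq] at hend₁ hend₂
    exact hne (by rw [hend₁.1, hend₁.2, hend₂.2])
  obtain ⟨i', hi', hii'⟩ :=
    h₁.exists_mem_snd_succ hij (by simp only [ne_eq, Prod.mk.injEq]; omega) hi
  obtain ⟨k', hk', hkk'⟩ :=
    h₂.exists_mem_fst_succ hjk (by simp only [ne_eq, Prod.mk.injEq]; omega) hk
  exact ⟨i', j + 1, k', hi', hk', hii', hkk', by omega⟩

theorem exists_comp (h₁ : IsWarping m₁ m₂ W₁) (h₂ : IsWarping m₂ m₃ W₂) :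
    ∃ W, IsWarping m₁ m₃ W ∧ ∀ q ∈ W, ∃ j, (q.1, j) ∈ W₁ ∧ (j, q.2) ∈ W₂ := by
  let P : ℕ × ℕ × ℕ → Prop := fun t => (t.1, t.2.1) ∈ W₁ ∧ (t.2.1, t.2.2) ∈ W₂
  let S : Set (ℕ × ℕ) := {q | ∃ j, (q.1, j) ∈ W₁ ∧ (j, q.2) ∈ W₂}
  -- The composed path is first built on triples `(i, j, k)`; its projection to `(i, k)` may
  -- stall while only `j` advances, which the reflexive closure absorbs.
  have hreach : ReflTransGen
      (fun t t' => (t'.1 = t.1 ∨ t'.1 = t.1 + 1) ∧ (t'.2.2 = t.2.2 ∨ t'.2.2 = t.2.2 + 1) ∧ P t')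
      (0, 0, 0) (m₁ - 1, m₂ - 1, m₃ - 1) := by
    refine reflTransGen_of_exists_rel_measure_lt P
      (fun t => (m₁ - 1 - t.1) + (m₂ - 1 - t.2.1) + (m₃ - 1 - t.2.2)) ?_ _
      ⟨h₁.zero_mem, h₂.zero_mem⟩
    rintro ⟨i, j, k⟩ ⟨hij, hjk⟩ hne
    obtain ⟨i', j', k', hij', hjk', hi, hk, hlt⟩ := exists_comp_step h₁ h₂ hij hjk hne
    have := h₁.le_of_mem hij
    have := h₁.le_of_mem hij'
    have := h₂.le_of_mem hjk'
    exact ⟨(i', j', k'), ⟨hij', hjk'⟩, ⟨hi, hk, hij', hjk'⟩, by dsimp only at *; omega⟩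
  have hproj : ReflTransGen (fun a b => WarpStep a b ∧ b ∈ S) (0, 0) (m₁ - 1, m₃ - 1) := by
    refine hreach.lift' (fun t => (t.1, t.2.2)) ?_
    rintro ⟨i, j, k⟩ ⟨i', j', k'⟩ ⟨hi, hk, hP⟩
    have hS : (i', k') ∈ S := ⟨j', hP⟩
    dsimp only at hi hk ⊢
    rcases hi with rfl | rfl <;> rcases hk with rfl | rfl
    · exact .refl
    · exact .single ⟨Or.inl rfl, hS⟩
    · exact .single ⟨Or.inr (Or.inl rfl), hS⟩
    · exact .single ⟨Or.inr (Or.inr rfl), hS⟩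
  exact exists_isWarping_of_reflTransGen ⟨0, h₁.zero_mem, h₂.zero_mem⟩ hproj

end IsWarping

theorem Finset.sum_le_mul_sum_of_injOn {α β : Type*} {s : Finset α} {t : Finset β} {C : ℕ}
    (g : α → β) (k : α → ℕ) (hinj : Set.InjOn (fun a => (g a, k a)) s)
    (hg : ∀ a ∈ s, g a ∈ t) (hk : ∀ a ∈ s, k a < C) {f : β → ℝ} (hf : ∀ b ∈ t, 0 ≤ f b) :
    ∑ a ∈ s, f (g a) ≤ C * ∑ b ∈ t, f b := by
  classical
  calc ∑ a ∈ s, f (g a) = ∑ x ∈ s.image fun a => (g a, k a), f x.1 :=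
      (sum_image (f := fun x => f x.1) hinj).symm
    _ ≤ ∑ x ∈ t ×ˢ range C, f x.1 := by
      refine sum_le_sum_of_subset_of_nonneg ?_ fun x hx _ => hf _ (mem_product.1 hx).1
      intro x hx
      obtain ⟨a, ha, rfl⟩ := mem_image.1 hx
      exact mem_product.2 ⟨hg a ha, mem_range.2 (hk a ha)⟩
    _ = C * ∑ b ∈ t, f b := by simp [sum_product, mul_sum]

section Cost

variable {X : Type*} [MetricSpace X] [Inhabited X]

theorem warpCost_nonneg (p : ℝ) (σ τ : List X) (W : List (ℕ × ℕ)) : 0 ≤ warpCost p σ τ W :=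
  List.sum_nonneg fun _ h => by
    obtain ⟨_, _, rfl⟩ := List.mem_map.1 h
    exact Real.rpow_nonneg dist_nonneg p

theorem warpCost_map_swap (p : ℝ) (σ τ : List X) (W : List (ℕ × ℕ)) :
    warpCost p τ σ (W.map Prod.swap) = warpCost p σ τ W := by
  simp [warpCost, Function.comp_def, dist_comm]

theorem warpCost_eq_sum_toFinset (p : ℝ) (σ τ : List X) {W : List (ℕ × ℕ)} (hW : W.Nodup) :
    warpCost p σ τ W = ∑ q ∈ W.toFinset, dist (σ.getD q.1 default) (τ.getD q.2 default) ^ p := by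
  rw [warpCost, List.sum_toFinset _ hW]

theorem dtw_nonneg (p : ℝ) (σ τ : List X) : 0 ≤ dtw p σ τ :=
  Real.sInf_nonneg fun _ ⟨W, _, hc⟩ => hc ▸ Real.rpow_nonneg (warpCost_nonneg p σ τ W) _

theorem dtw_le_warpCost (p : ℝ) {σ τ : List X} {W : List (ℕ × ℕ)}
    (h : IsWarping σ.length τ.length W) : dtw p σ τ ≤ warpCost p σ τ W ^ (1 / p) :=
  csInf_le ⟨0, fun _ ⟨W, _, hc⟩ => hc ▸ Real.rpow_nonneg (warpCost_nonneg p σ τ W) _⟩ ⟨W, h, rfl⟩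

theorem le_mul_dtw {p a A : ℝ} {σ τ : List X} (hA : 0 < A)
    (h : ∀ W, IsWarping σ.length τ.length W → a ≤ A * warpCost p σ τ W ^ (1 / p)) :
    a ≤ A * dtw p σ τ := by
  rw [← div_le_iff₀' hA]
  obtain ⟨W₀, hW₀⟩ := exists_isWarping σ.length τ.length
  exact le_csInf ⟨_, W₀, hW₀, rfl⟩ fun _ ⟨W, hW, hc⟩ => hc ▸ (div_le_iff₀' hA).2 (h W hW)

theorem dtw_comm (p : ℝ) (σ τ : List X) : dtw p σ τ = dtw p τ σ := by
  unfold dtw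
  congr 1
  ext c
  constructor <;> rintro ⟨W, hW, rfl⟩ <;>
    exact ⟨W.map Prod.swap, hW.swap, by rw [warpCost_map_swap]⟩

end Cost

section Triangle

variable {X : Type*} [MetricSpace X] [Inhabited X]

theorem warpCost_rpow_le_of_comp {p : ℝ} (hp : 1 ≤ p) {x y z : List X} (hx : x ≠ [])
    (hz : z ≠ []) {W₁ W₂ W : List (ℕ × ℕ)} (h₁ : IsWarping x.length y.length W₁)
    (h₂ : IsWarping y.length z.length W₂) (h : IsWarping x.length z.length W)
    (hW : ∀ q ∈ W, ∃ j, (q.1, j) ∈ W₁ ∧ (j, q.2) ∈ W₂) :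
    warpCost p x z W ^ (1 / p) ≤ (z.length : ℝ) ^ (1 / p) * warpCost p x y W₁ ^ (1 / p) +
      (x.length : ℝ) ^ (1 / p) * warpCost p y z W₂ ^ (1 / p) := by
  classical
  choose! j hj₁ hj₂ using hW
  set s := W.toFinset
  set a : ℕ × ℕ → ℝ := fun q => dist (x.getD q.1 default) (y.getD (j q) default)
  set b : ℕ × ℕ → ℝ := fun q => dist (y.getD (j q) default) (z.getD q.2 default)
  have hbound : ∀ q ∈ s, q.1 < x.length ∧ q.2 < z.length := fun q hq => by
    have := h.le_of_mem (List.mem_toFinset.1 hq)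
    have := List.length_pos_of_ne_nil hx
    have := List.length_pos_of_ne_nil hz
    omega
  have ha : ∑ q ∈ s, a q ^ p ≤ z.length * warpCost p x y W₁ := by
    rw [warpCost_eq_sum_toFinset _ _ _ h₁.nodup]
    refine Finset.sum_le_mul_sum_of_injOn (fun q => (q.1, j q)) Prod.snd
      (f := fun e => dist (x.getD e.1 default) (y.getD e.2 default) ^ p)
      (fun q hq q' hq' hqq' => ?_) (fun q hq => ?_) (fun q hq => (hbound q hq).2)
      fun _ _ => Real.rpow_nonneg dist_nonneg _
    · simp only [Prod.mk.injEq] at hqq'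
      exact Prod.ext hqq'.1.1 hqq'.2
    · exact List.mem_toFinset.2 (hj₁ q (List.mem_toFinset.1 hq))
  have hb : ∑ q ∈ s, b q ^ p ≤ x.length * warpCost p y z W₂ := by
    rw [warpCost_eq_sum_toFinset _ _ _ h₂.nodup]
    refine Finset.sum_le_mul_sum_of_injOn (fun q => (j q, q.2)) Prod.fst
      (f := fun e => dist (y.getD e.1 default) (z.getD e.2 default) ^ p)
      (fun q hq q' hq' hqq' => ?_) (fun q hq => ?_) (fun q hq => (hbound q hq).1)
      fun _ _ => Real.rpow_nonneg dist_nonneg _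
    · simp only [Prod.mk.injEq] at hqq'
      exact Prod.ext hqq'.2 hqq'.1.2
    · exact List.mem_toFinset.2 (hj₂ q (List.mem_toFinset.1 hq))
  calc warpCost p x z W ^ (1 / p) ≤ (∑ q ∈ s, (a q + b q) ^ p) ^ (1 / p) := by
        rw [warpCost_eq_sum_toFinset _ _ _ h.nodup]
        gcongr with q
        exact dist_triangle _ _ _
    _ ≤ (∑ q ∈ s, a q ^ p) ^ (1 / p) + (∑ q ∈ s, b q ^ p) ^ (1 / p) :=
        Real.Lp_add_le_of_nonneg s hp (fun _ _ => dist_nonneg) fun _ _ => dist_nonneg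
    _ ≤ (z.length * warpCost p x y W₁) ^ (1 / p) + (x.length * warpCost p y z W₂) ^ (1 / p) := by
        gcongr
    _ = _ := by
        rw [Real.mul_rpow (Nat.cast_nonneg _) (warpCost_nonneg _ _ _ _),
          Real.mul_rpow (Nat.cast_nonneg _) (warpCost_nonneg _ _ _ _)]

theorem dtw_le_add {p : ℝ} (hp : 1 ≤ p) {x z : List X} (hx : x ≠ []) (hz : z ≠ [])
    (y : List X) :
    dtw p x z ≤ (z.length : ℝ) ^ (1 / p) * dtw p x y + (x.length : ℝ) ^ (1 / p) * dtw p y z := by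
  have hpos : ∀ σ : List X, σ ≠ [] → 0 < (σ.length : ℝ) ^ (1 / p) := fun σ hσ =>
    Real.rpow_pos_of_pos (Nat.cast_pos.2 (List.length_pos_of_ne_nil hσ)) _
  rw [← sub_le_iff_le_add]
  refine le_mul_dtw (hpos z hz) fun W₁ h₁ => ?_
  rw [sub_le_iff_le_add, ← sub_le_iff_le_add']
  refine le_mul_dtw (hpos x hx) fun W₂ h₂ => ?_
  obtain ⟨W, h, hW⟩ := h₁.exists_comp h₂
  rw [sub_le_iff_le_add']
  exact (dtw_le_warpCost p h).trans (warpCost_rpow_le_of_comp hp hx hz h₁ h₂ h hW)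

end Triangle

theorem dtw_le_of_simplification {X : Type*} [MetricSpace X] [Inhabited X] {p α : ℝ}
    (hp : 1 ≤ p) {m ℓ : ℕ} {π π' c τ : List X} (hπ' : SeqLE ℓ π') (hc : SeqLE ℓ c)
    (hτ : 2 ≤ τ.length ∧ τ.length ≤ m) (hsimp : dtw p π π' ≤ α * dtw p π c) :
    dtw p π' τ ≤ (m : ℝ) ^ (1 / p) * (ℓ : ℝ) ^ (1 / p) * ((1 + α) * dtw p c π + dtw p c τ) := by
  have ne_nil : ∀ σ : List X, 2 ≤ σ.length → σ ≠ [] := fun σ hσ =>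
    List.ne_nil_of_length_pos (by omega)
  have root_le : ∀ {a b : ℕ}, a ≤ b → (a : ℝ) ^ (1 / p) ≤ (b : ℝ) ^ (1 / p) := fun h =>
    Real.rpow_le_rpow (Nat.cast_nonneg _) (Nat.cast_le.2 h) (by positivity)
  have hm : (1 : ℝ) ≤ (m : ℝ) ^ (1 / p) :=
    Real.one_le_rpow (by exact_mod_cast (by omega : 1 ≤ m)) (by positivity)
  have hL : (0 : ℝ) ≤ (ℓ : ℝ) ^ (1 / p) := by positivity
  have hcπ := dtw_nonneg p c π
  have hcτ := dtw_nonneg p c τ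
  have hπ'π : dtw p π' π ≤ α * dtw p c π := by rwa [dtw_comm p π' π, dtw_comm p c π]
  have hπ'c : dtw p π' c ≤ (ℓ : ℝ) ^ (1 / p) * ((1 + α) * dtw p c π) :=
    calc dtw p π' c
        ≤ (c.length : ℝ) ^ (1 / p) * dtw p π' π + (π'.length : ℝ) ^ (1 / p) * dtw p π c :=
          dtw_le_add hp (ne_nil _ hπ'.1) (ne_nil _ hc.1) π
      _ ≤ (ℓ : ℝ) ^ (1 / p) * (α * dtw p c π) + (ℓ : ℝ) ^ (1 / p) * dtw p c π := by
          rw [dtw_comm p π c]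
          exact add_le_add (mul_le_mul (root_le hc.2) hπ'π (dtw_nonneg _ _ _) hL)
            (mul_le_mul_of_nonneg_right (root_le hπ'.2) hcπ)
      _ = (ℓ : ℝ) ^ (1 / p) * ((1 + α) * dtw p c π) := by ring
  calc dtw p π' τ
      ≤ (τ.length : ℝ) ^ (1 / p) * dtw p π' c + (π'.length : ℝ) ^ (1 / p) * dtw p c τ :=
        dtw_le_add hp (ne_nil _ hπ'.1) (ne_nil _ hτ.1) c
    _ ≤ (m : ℝ) ^ (1 / p) * ((ℓ : ℝ) ^ (1 / p) * ((1 + α) * dtw p c π)) +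
          (ℓ : ℝ) ^ (1 / p) * dtw p c τ :=
        add_le_add (mul_le_mul (root_le hτ.2) hπ'c (dtw_nonneg _ _ _) (by linarith))
          (mul_le_mul_of_nonneg_right (root_le hπ'.2) hcτ)
    _ ≤ (m : ℝ) ^ (1 / p) * ((ℓ : ℝ) ^ (1 / p) * ((1 + α) * dtw p c π)) +
          (m : ℝ) ^ (1 / p) * ((ℓ : ℝ) ^ (1 / p) * dtw p c τ) :=
        add_le_add_right (le_mul_of_one_le_left (mul_nonneg hL hcτ) hm) _
    _ = _ := by ring

theorem expected_cost_random_simplification_general {X : Type*} [MetricSpace X] [Inhabited X]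
    (T : Finset (List X)) (hT : T.Nonempty) (m ℓ : ℕ)
    (hm : ∀ τ ∈ T, 2 ≤ τ.length ∧ τ.length ≤ m)
    (p : ℝ) (hp : 1 ≤ p) (α : ℝ)
    (simp : List X → List X)
    (hsimp : ∀ τ ∈ T, SeqLE ℓ (simp τ) ∧
      ∀ π' : List X, SeqLE ℓ π' → dtw p τ (simp τ) ≤ α * dtw p τ π') :
    ∀ c : List X, SeqLE ℓ c →
      (∑ π ∈ T, dtwCost p 1 T (simp π)) / (T.card : ℝ) ≤
        (2 + α) * (m : ℝ) ^ (1 / p) * (ℓ : ℝ) ^ (1 / p) * dtwCost p 1 T c := by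
  intro c hc
  rw [div_le_iff₀ (Nat.cast_pos.2 hT.card_pos)]
  calc ∑ π ∈ T, dtwCost p 1 T (simp π)
      ≤ ∑ π ∈ T, ∑ τ ∈ T,
          (m : ℝ) ^ (1 / p) * (ℓ : ℝ) ^ (1 / p) * ((1 + α) * dtw p c π + dtw p c τ) := by
        simp only [dtwCost, Real.rpow_one]
        gcongr with π hπ τ hτ
        exact dtw_le_of_simplification hp (hsimp π hπ).1 hc (hm τ hτ) ((hsimp π hπ).2 c hc)
    _ = (2 + α) * (m : ℝ) ^ (1 / p) * (ℓ : ℝ) ^ (1 / p) * dtwCost p 1 T c * T.card := by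
        simp only [dtwCost, Real.rpow_one, ← Finset.mul_sum, Finset.sum_add_distrib,
          Finset.sum_const, nsmul_eq_mul]
        ring

/-- **Expected cost of a random simplified input sequence** (Theorem `lem:sampleonesequence`):
if `π` is drawn uniformly from `T` and `π̃` is an `(α,ℓ)`-simplification of `π` under `dtw_p`,
then `E_π[cost_p^1(T, π̃)] ≤ (2+α) m^{1/p} ℓ^{1/p} · OPT_ℓ`. The expectation is written as
the average over `T`, and the bound is stated against every candidate `c ∈ X^{≤ℓ}`
(equivalently, against the optimal restricted `(p,1)`-mean cost `OPT_ℓ`). -/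
theorem expected_cost_random_simplification {X : Type*} [MetricSpace X] [Inhabited X]
    (T : Finset (List X)) (hT : T.Nonempty) (n m ℓ : ℕ) (hn : T.card = n)
    (hm : ∀ τ ∈ T, 2 ≤ τ.length ∧ τ.length ≤ m)
    (hℓ2 : 2 ≤ ℓ) (hℓm : ℓ ≤ m)
    (p : ℝ) (hp : 1 ≤ p) (α : ℝ) (hα : 1 ≤ α)
    (simp : List X → List X)
    (hsimp : ∀ τ ∈ T, SeqLE ℓ (simp τ) ∧
      ∀ π' : List X, SeqLE ℓ π' → dtw p τ (simp τ) ≤ α * dtw p τ π') :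
    ∀ c : List X, SeqLE ℓ c →
      (∑ π ∈ T, dtwCost p 1 T (simp π)) / (T.card : ℝ) ≤
        (2 + α) * (m : ℝ) ^ (1 / p) * (ℓ : ℝ) ^ (1 / p) * dtwCost p 1 T c :=
  expected_cost_random_simplification_general T hT m ℓ hm p hp α simp hsimp
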